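/- Let T be a densely defined closed positive operator on a complex Hilbert space H. Then the following are equivalent: (1) T is minimum attaining; (2) m(T) is an eigenvalue of T, i.e. there exists a nonzero x ∈ D(T) with Tx = m(T)x; (3) m(T) is an extreme point of the numerical range W(T) = {⟨Tx, x⟩ : x ∈ D(T), ‖x‖ = 1}. -/

import Mathlib

/-! For a positive self-adjoint `T`, `m(T) ‖x‖² ≤ re ⟪T x, x⟫` on the domain, so `m(T)` is the
bottom of the numerical range. Indeed, if `m(T) > 0` then `T` is injective with dense range, and
Cauchy–Schwarz for the positive form `re ⟪T ·, ·⟫` gives `m(T) (re ⟪x, T z⟫)² ≤ re ⟪T x, x⟫ ‖T z‖²`;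
now let `T z → x`.

Each of the three conditions then yields a unit vector `x` with `re ⟪T x, x⟫ = m(T)`, that is, a
null vector of the positive form `re ⟪(T - m(T)) ·, ·⟫`. By Cauchy–Schwarz again, `(T - m(T)) x` is
orthogonal to the dense domain, so `x` is an eigenvector for `m(T)`. -/

open scoped InnerProductSpace

variable {H : Type*} [NormedAddCommGroup H] [InnerProductSpace ℂ H] [CompleteSpace H]

/-- The minimum modulus `m(T) = inf {‖Tx‖ : x ∈ D(T), ‖x‖ = 1}`. -/
noncomputable def minMod (T : H →ₗ.[ℂ] H) : ℝ :=
  sInf {r : ℝ | ∃ x : T.domain, ‖(x : H)‖ = 1 ∧ r = ‖T x‖}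

/-- `T` is minimum attaining: some unit vector of the domain attains `m(T)`. -/
def MinAttains (T : H →ₗ.[ℂ] H) : Prop :=
  ∃ x : T.domain, ‖(x : H)‖ = 1 ∧ ‖T x‖ = minMod T

/-- A densely defined operator is positive if it is self-adjoint and `⟨Tx, x⟩ ≥ 0`. -/
def IsPositivePMap (T : H →ₗ.[ℂ] H) : Prop :=
  IsSelfAdjoint T ∧ ∀ x : T.domain, 0 ≤ (⟪T x, (x : H)⟫_ℂ).re

/-- The numerical range `W(T) = {⟨Tx, x⟩ : x ∈ D(T), ‖x‖ = 1}`. -/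
def numericalRange (T : H →ₗ.[ℂ] H) : Set ℂ :=
  {z : ℂ | ∃ x : T.domain, ‖(x : H)‖ = 1 ∧ z = ⟪T x, (x : H)⟫_ℂ}

theorem ofReal_mem_extremePoints_of_subset_image_Ici {S : Set ℂ} {a : ℝ} (ha : (a : ℂ) ∈ S)
    (hS : S ⊆ ((↑) : ℝ → ℂ) '' Set.Ici a) : (a : ℂ) ∈ S.extremePoints ℝ := by
  refine ⟨ha, fun z₁ hz₁ z₂ hz₂ ⟨s, t, hs, ht, hst, hsum⟩ => ?_⟩
  obtain ⟨r₁, hr₁ : a ≤ r₁, rfl⟩ := hS hz₁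
  obtain ⟨r₂, hr₂ : a ≤ r₂, rfl⟩ := hS hz₂
  have h : s * (r₁ - a) + t * (r₂ - a) = 0 := by
    linear_combination (by simpa using congrArg Complex.re hsum : s * r₁ + t * r₂ = a) - a * hst
  have h₁ := ((add_eq_zero_iff_of_nonneg (mul_nonneg hs.le (sub_nonneg.mpr hr₁))
    (mul_nonneg ht.le (sub_nonneg.mpr hr₂))).mp h).1
  rw [mul_eq_zero, sub_eq_zero] at h₁
  exact congrArg _ (h₁.resolve_left hs.ne')

namespace LinearPMap

variable {E : Type*} [NormedAddCommGroup E] [InnerProductSpace ℂ E]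

theorem exists_ne_zero_map_eq_smul_iff (T : E →ₗ.[ℂ] E) (a : ℂ) :
    (∃ x : T.domain, (x : E) ≠ 0 ∧ T x = a • (x : E)) ↔
      ∃ x : T.domain, ‖(x : E)‖ = 1 ∧ T x = a • (x : E) := by
  constructor
  · rintro ⟨x, hx, hTx⟩
    refine ⟨(‖(x : E)‖⁻¹ : ℂ) • x, by simp [norm_smul, hx], ?_⟩
    rw [map_smul, hTx, Submodule.coe_smul, smul_comm]
  · rintro ⟨x, hx, hTx⟩
    exact ⟨x, norm_ne_zero_iff.mp (hx ▸ one_ne_zero), hTx⟩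

noncomputable def reInnerSubSmul (T : E →ₗ.[ℂ] E) (c : ℝ) : LinearMap.BilinForm ℝ T.domain :=
  LinearMap.mk₂ ℝ (fun u v => (⟪T u - (c : ℂ) • (u : E), (v : E)⟫_ℂ).re)
    (fun u u' v => by
      rw [map_add, Submodule.coe_add, smul_add, add_sub_add_comm, inner_add_left, Complex.add_re])
    (fun r u v => by
      rw [show T (r • u) = r • T u from T.toFun.map_smul_of_tower r u, Submodule.coe_smul_of_tower,
        smul_comm, ← smul_sub, ← Complex.coe_smul, inner_smul_left, Complex.conj_ofReal,
        Complex.re_ofReal_mul, smul_eq_mul])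
    (fun u v v' => by rw [Submodule.coe_add, inner_add_right, Complex.add_re])
    (fun r u v => by
      rw [Submodule.coe_smul_of_tower, ← Complex.coe_smul, inner_smul_right, Complex.re_ofReal_mul,
        smul_eq_mul])

theorem reInnerSubSmul_apply (T : E →ₗ.[ℂ] E) (c : ℝ) (u v : T.domain) :
    T.reInnerSubSmul c u v = (⟪T u, v⟫_ℂ).re - c * (⟪(u : E), v⟫_ℂ).re := by
  simp [reInnerSubSmul]

theorem reInnerSubSmul_self (T : E →ₗ.[ℂ] E) (c : ℝ) (u : T.domain) :
    T.reInnerSubSmul c u u = (⟪T u, u⟫_ℂ).re - c * ‖(u : E)‖ ^ 2 := by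
  rw [reInnerSubSmul_apply, ← inner_self_eq_norm_sq (𝕜 := ℂ)]
  rfl

theorem IsFormalAdjoint.reInnerSubSmul_isSymm {T : E →ₗ.[ℂ] E} (hT : T.IsFormalAdjoint T)
    (c : ℝ) : LinearMap.IsSymm (T.reInnerSubSmul c) :=
  LinearMap.isSymm_def.mpr fun u v => by
    rw [RingHom.id_apply, reInnerSubSmul_apply, reInnerSubSmul_apply, hT v u,
      ← inner_conj_symm (v : E) (T u), ← inner_conj_symm (v : E) (u : E), Complex.conj_re,
      Complex.conj_re]

theorem IsFormalAdjoint.map_eq_smul_of_re_inner_eq {T : E →ₗ.[ℂ] E} (hT : T.IsFormalAdjoint T)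
    (hdense : Dense (T.domain : Set E)) {c : ℝ}
    (hc : ∀ u : T.domain, c * ‖(u : E)‖ ^ 2 ≤ (⟪T u, u⟫_ℂ).re) {x : T.domain}
    (hx : (⟪T x, x⟫_ℂ).re = c * ‖(x : E)‖ ^ 2) : T x = (c : ℂ) • (x : E) := by
  have hker : x ∈ LinearMap.ker (T.reInnerSubSmul c) :=
    ((T.reInnerSubSmul c).apply_apply_same_eq_zero_iff
      (fun u => by rw [T.reInnerSubSmul_self]; linarith [hc u]) (hT.reInnerSubSmul_isSymm c)).mp
      (by rw [T.reInnerSubSmul_self, hx, sub_self])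
  have hre : ∀ u : T.domain, (⟪T x - (c : ℂ) • (x : E), u⟫_ℂ).re = 0 := fun u =>
    LinearMap.congr_fun (LinearMap.mem_ker.mp hker) u
  have horth : ∀ u : T.domain, ⟪T x - (c : ℂ) • (x : E), u⟫_ℂ = 0 := fun u => by
    have him := hre (Complex.I • u)
    rw [Submodule.coe_smul, inner_smul_right, Complex.I_mul_re, neg_eq_zero] at him
    exact Complex.ext (hre u) him
  exact sub_eq_zero.mp (hdense.eq_zero_of_inner_left ℂ fun v hv => horth ⟨v, hv⟩)

end LinearPMap

section MinimumModulus

variable {E : Type*} [NormedAddCommGroup E] [InnerProductSpace ℂ E] (T : E →ₗ.[ℂ] E)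

theorem minMod_nonneg : 0 ≤ minMod T :=
  Real.sInf_nonneg fun _ ⟨_, _, hr⟩ => hr ▸ norm_nonneg _

theorem minMod_le_norm_map {x : T.domain} (hx : ‖(x : E)‖ = 1) : minMod T ≤ ‖T x‖ :=
  csInf_le ⟨0, fun _ ⟨_, _, hr⟩ => hr ▸ norm_nonneg _⟩ ⟨x, hx, rfl⟩

theorem minMod_mul_norm_le (x : T.domain) : minMod T * ‖(x : E)‖ ≤ ‖T x‖ := by
  rcases eq_or_ne (x : E) 0 with hx | hx
  · simp [hx]
  · have h := minMod_le_norm_map T (x := (‖(x : E)‖⁻¹ : ℂ) • x) (by simp [norm_smul, hx])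
    rw [T.map_smul, norm_smul, norm_inv, Complex.norm_real, norm_norm,
      ← div_eq_inv_mul, le_div_iff₀ (norm_pos_iff.mpr hx)] at h
    exact h

theorem injective_of_minMod_pos (hm : 0 < minMod T) : Function.Injective T := by
  intro u v huv
  have h := minMod_mul_norm_le T (u - v)
  rw [T.map_sub, huv, sub_self, norm_zero] at h
  exact sub_eq_zero.mp (Subtype.ext (norm_le_zero_iff.mp (nonpos_of_mul_nonpos_right h hm)))

end MinimumModulus

section SelfAdjoint

variable {𝕜 E : Type*} [RCLike 𝕜] [NormedAddCommGroup E] [InnerProductSpace 𝕜 E] [CompleteSpace E]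
  {T : E →ₗ.[𝕜] E}

theorem IsSelfAdjoint.isFormalAdjoint (hT : IsSelfAdjoint T) : T.IsFormalAdjoint T := by
  have h := LinearPMap.adjoint_isFormalAdjoint hT.dense_domain (T := T)
  rwa [LinearPMap.isSelfAdjoint_def.mp hT] at h

theorem IsSelfAdjoint.exists_mem_domain_map_eq (hT : IsSelfAdjoint T) {y z : E}
    (h : ∀ x : T.domain, ⟪z, (x : E)⟫_𝕜 = ⟪y, T x⟫_𝕜) : ∃ hy : y ∈ T.domain, T ⟨y, hy⟩ = z := by
  have hy : y ∈ T.adjoint.domain := LinearPMap.mem_adjoint_domain_of_exists y ⟨z, h⟩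
  have hTy := LinearPMap.adjoint_apply_eq hT.dense_domain ⟨y, hy⟩ h
  revert hy hTy
  rw [LinearPMap.isSelfAdjoint_def.mp hT]
  exact fun hy hTy => ⟨hy, hTy⟩

theorem IsSelfAdjoint.denseRange (hT : IsSelfAdjoint T) (hinj : Function.Injective T) :
    DenseRange T := by
  change Dense (LinearMap.range T.toFun : Set E)
  rw [Submodule.dense_iff_topologicalClosure_eq_top, Submodule.topologicalClosure_eq_top_iff,
    Submodule.eq_bot_iff]
  intro y hy
  obtain ⟨hy, hTy⟩ := hT.exists_mem_domain_map_eq (y := y) (z := 0) fun x => by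
    rw [inner_zero_left]
    exact (Submodule.inner_left_of_mem_orthogonal (LinearMap.mem_range_self _ x) hy).symm
  exact congrArg Subtype.val (hinj (hTy.trans T.map_zero.symm))

end SelfAdjoint

section FormalAdjoint

variable {E : Type*} [NormedAddCommGroup E] [InnerProductSpace ℂ E] {T : E →ₗ.[ℂ] E}

theorem LinearPMap.IsFormalAdjoint.minMod_mul_re_inner_sq_le (hT : T.IsFormalAdjoint T)
    (hpos : ∀ x : T.domain, 0 ≤ (⟪T x, x⟫_ℂ).re) (x z : T.domain) :
    minMod T * (⟪(x : E), T z⟫_ℂ).re ^ 2 ≤ (⟪T x, x⟫_ℂ).re * ‖T z‖ ^ 2 := by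
  have hB := (T.reInnerSubSmul 0).apply_sq_le_of_symm
    (fun u => by simpa [LinearPMap.reInnerSubSmul_apply] using hpos u)
    (hT.reInnerSubSmul_isSymm 0) x z
  simp only [LinearPMap.reInnerSubSmul_apply, zero_mul, sub_zero, hT x z] at hB
  have hz : minMod T * (⟪T z, z⟫_ℂ).re ≤ ‖T z‖ ^ 2 :=
    calc minMod T * (⟪T z, z⟫_ℂ).re ≤ minMod T * (‖T z‖ * ‖(z : E)‖) :=
          mul_le_mul_of_nonneg_left (re_inner_le_norm (𝕜 := ℂ) _ _) (minMod_nonneg T)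
      _ ≤ ‖T z‖ ^ 2 := by nlinarith [minMod_mul_norm_le T z, norm_nonneg (T z)]
  calc minMod T * (⟪(x : E), T z⟫_ℂ).re ^ 2
      ≤ minMod T * ((⟪T x, x⟫_ℂ).re * (⟪T z, z⟫_ℂ).re) :=
        mul_le_mul_of_nonneg_left hB (minMod_nonneg T)
    _ = (⟪T x, x⟫_ℂ).re * (minMod T * (⟪T z, z⟫_ℂ).re) := by ring
    _ ≤ (⟪T x, x⟫_ℂ).re * ‖T z‖ ^ 2 := mul_le_mul_of_nonneg_left hz (hpos x)

end FormalAdjoint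

namespace IsPositivePMap

variable {E : Type*} [NormedAddCommGroup E] [InnerProductSpace ℂ E] [CompleteSpace E]
  {T : E →ₗ.[ℂ] E}

theorem minMod_mul_norm_sq_le (hT : IsPositivePMap T) (x : T.domain) :
    minMod T * ‖(x : E)‖ ^ 2 ≤ (⟪T x, x⟫_ℂ).re := by
  obtain ⟨hsa, hpos⟩ := hT
  rcases (minMod_nonneg T).eq_or_lt with hm | hm
  · rw [← hm, zero_mul]
    exact hpos x
  have hall : ∀ y : E, minMod T * (⟪(x : E), y⟫_ℂ).re ^ 2 ≤ (⟪T x, x⟫_ℂ).re * ‖y‖ ^ 2 :=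
    fun y => (hsa.denseRange (injective_of_minMod_pos T hm)).induction_on y
      (isClosed_le (by fun_prop) (by fun_prop))
      (hsa.isFormalAdjoint.minMod_mul_re_inner_sq_le hpos x)
  have hx := hall x
  rw [show (⟪(x : E), x⟫_ℂ).re = ‖(x : E)‖ ^ 2 from inner_self_eq_norm_sq (𝕜 := ℂ) _] at hx
  rcases eq_or_ne (x : E) 0 with h0 | h0
  · simp [h0]
  · have hx0 : 0 < ‖(x : E)‖ ^ 2 := by positivity
    nlinarith

theorem map_eq_minMod_smul (hT : IsPositivePMap T) {x : T.domain}
    (hx : (⟪T x, x⟫_ℂ).re = minMod T * ‖(x : E)‖ ^ 2) : T x = (minMod T : ℂ) • (x : E) :=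
  hT.1.isFormalAdjoint.map_eq_smul_of_re_inner_eq hT.1.dense_domain hT.minMod_mul_norm_sq_le hx

theorem minAttains_iff (hT : IsPositivePMap T) :
    MinAttains T ↔ ∃ x : T.domain, ‖(x : E)‖ = 1 ∧ T x = (minMod T : ℂ) • (x : E) := by
  constructor
  · rintro ⟨x, hx, hTx⟩
    refine ⟨x, hx, hT.map_eq_minMod_smul (le_antisymm ?_ (hT.minMod_mul_norm_sq_le x))⟩
    calc (⟪T x, x⟫_ℂ).re ≤ ‖T x‖ * ‖(x : E)‖ := re_inner_le_norm (𝕜 := ℂ) _ _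
      _ = minMod T * ‖(x : E)‖ ^ 2 := by rw [hTx, hx]; ring
  · rintro ⟨x, hx, hTx⟩
    refine ⟨x, hx, ?_⟩
    rw [hTx, norm_smul, hx, mul_one, Complex.norm_real, Real.norm_of_nonneg (minMod_nonneg T)]

theorem numericalRange_subset_image_Ici (hT : IsPositivePMap T) :
    numericalRange T ⊆ ((↑) : ℝ → ℂ) '' Set.Ici (minMod T) := by
  rintro _ ⟨x, hx, rfl⟩
  refine ⟨(⟪T x, x⟫_ℂ).re, by simpa [hx] using hT.minMod_mul_norm_sq_le x, ?_⟩
  rw [← Complex.conj_eq_iff_re, inner_conj_symm, hT.1.isFormalAdjoint x x]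

theorem ofReal_minMod_mem_extremePoints_iff (hT : IsPositivePMap T) :
    (minMod T : ℂ) ∈ (numericalRange T).extremePoints ℝ ↔
      ∃ x : T.domain, ‖(x : E)‖ = 1 ∧ T x = (minMod T : ℂ) • (x : E) := by
  constructor
  · rintro ⟨⟨x, hx, hmx⟩, -⟩
    exact ⟨x, hx, hT.map_eq_minMod_smul (by rw [← hmx, hx]; simp)⟩
  · rintro ⟨x, hx, hTx⟩
    refine ofReal_mem_extremePoints_of_subset_image_Ici ⟨x, hx, ?_⟩
      hT.numericalRange_subset_image_Ici
    rw [hTx, inner_smul_left, inner_self_eq_norm_sq_to_K, hx]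
    simp

end IsPositivePMap

theorem minAttains_iff_eigenvalue_iff_extremePoint_general (T : H →ₗ.[ℂ] H)
    (hpos : IsPositivePMap T) :
    (MinAttains T ↔ ∃ x : T.domain, (x : H) ≠ 0 ∧ T x = (minMod T : ℂ) • (x : H)) ∧
    (MinAttains T ↔ (minMod T : ℂ) ∈ Set.extremePoints ℝ (numericalRange T)) := by
  rw [LinearPMap.exists_ne_zero_map_eq_smul_iff, hpos.ofReal_minMod_mem_extremePoints_iff]
  exact ⟨hpos.minAttains_iff, hpos.minAttains_iff⟩

/-- For a densely defined closed positive operator `T`, the following are equivalent: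
(1) `T` is minimum attaining; (2) `m(T)` is an eigenvalue of `T`;
(3) `m(T)` is an extreme point of the numerical range `W(T)`. -/
theorem minAttains_iff_eigenvalue_iff_extremePoint (T : H →ₗ.[ℂ] H)
    (hdense : Dense (T.domain : Set H)) (hclosed : T.IsClosed) (hpos : IsPositivePMap T) :
    (MinAttains T ↔ ∃ x : T.domain, (x : H) ≠ 0 ∧ T x = (minMod T : ℂ) • (x : H)) ∧
    (MinAttains T ↔ (minMod T : ℂ) ∈ Set.extremePoints ℝ (numericalRange T)) :=
  minAttains_iff_eigenvalue_iff_extremePoint_general T hpos
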